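/- If (a,b) ∈ Ω₂ and (c,d) ∈ Ω₂ are such that M_{a,b}·M_{c,d}⁻¹ ∈ Γ_R, then (a,b) = (c,d). In other words, the map (a,b) ↦ M_{a,b}·Γ_R from Ω₂ to SL(2,ℝ)/Γ_R is injective. -/

import Mathlib

open Real Matrix Set

noncomputable section

abbrev SL2 := Matrix.SpecialLinearGroup (Fin 2) ℝ

/-- The first generator of the Veech group of the rotated surface 𝓛^R. -/
def RgenR : SL2 := ⟨!![1 + Real.sqrt 2, -1; 2 + Real.sqrt 2, -1], by
  rw [Matrix.det_fin_two_of]; ring⟩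

/-- The second (parabolic) generator of the Veech group of 𝓛^R. -/
def SgenR : SL2 := ⟨!![1, 1; 0, 1], by rw [Matrix.det_fin_two_of]; ring⟩

/-- The Veech group Γ_R of the rotated surface 𝓛^R. -/
def ΓR : Subgroup SL2 := Subgroup.closure {RgenR, SgenR}

/-- The matrix M_{a,b} = [[a,b],[0,a⁻¹]] as an element of SL(2,ℝ). -/
def Mab (a b : ℝ) (ha : a ≠ 0) : SL2 :=
  ⟨!![a, b; 0, a⁻¹], by rw [Matrix.det_fin_two_of]; field_simp <;> simp⟩

/-- The region Ω₂ = {(a,b) : 0 < a ≤ 1, 1 − a < b ≤ 1}. -/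
def Ω₂ : Set (ℝ × ℝ) := {p | 0 < p.1 ∧ p.1 ≤ 1 ∧ 1 - p.1 < p.2 ∧ p.2 ≤ 1}

/-!
`M_{a,b} M_{c,d}⁻¹ = [[a/c, bc - ad], [0, c/a]]` fixes `∞`, and the stabiliser of `∞` in `Γ_R` is
`{±Sᵐ}`. The latter is a ping-pong argument on `ℝP¹`: `R⁴ = -1`, every `Rᵇ` with `4 ∤ b` maps the
complement of `(0, 1]` into `(0, 1]`, and `Sⁿ` maps `(0, 1]` onto `(n, n + 1]`. So every element
of `Γ_R` is `±Sᵐ` or a word `Sⁿ Rᵇ g` sending `∞` to a finite point. Hence `a = c`, and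
`a (b - d)` is an integer of absolute value `< a² ≤ 1`, so `b = d`.
-/

lemma Matrix.SpecialLinearGroup.fin_two_smul {R : Type*} [CommRing R]
    (g : SpecialLinearGroup (Fin 2) R) (v : Fin 2 → R) :
    g • v = ![g 0 0 * v 0 + g 0 1 * v 1, g 1 0 * v 0 + g 1 1 * v 1] := by
  simp [Matrix.SpecialLinearGroup.smul_def]

lemma Matrix.SpecialLinearGroup.neg_smul {n R : Type*} [Fintype n] [DecidableEq n] [CommRing R]
    [Fact (Even (Fintype.card n))] (g : SpecialLinearGroup n R) (v : n → R) :
    (-g) • v = -(g • v) := by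
  rw [Matrix.SpecialLinearGroup.smul_def, coe_neg, _root_.neg_smul,
    ← Matrix.SpecialLinearGroup.smul_def]

open Matrix.SpecialLinearGroup (coe_mul coe_neg coe_one coe_inv map_apply_coe fin_two_smul)

lemma SgenR_eq_map_T :
    SgenR = SpecialLinearGroup.map (Int.castRingHom ℝ) ModularGroup.T := by
  ext i j; fin_cases i <;> fin_cases j <;> simp [SgenR]

lemma coe_SgenR_zpow (m : ℤ) :
    ((SgenR ^ m : SL2) : Matrix (Fin 2) (Fin 2) ℝ) = !![1, (m : ℝ); 0, 1] := by
  rw [SgenR_eq_map_T, ← map_zpow, map_apply_coe, ModularGroup.coe_T_zpow]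
  ext i j; fin_cases i <;> fin_cases j <;> simp

lemma coe_RgenR : (RgenR : Matrix (Fin 2) (Fin 2) ℝ) = !![1 + √2, -1; 2 + √2, -1] := rfl

lemma coe_RgenR_sq : ((RgenR ^ 2 : SL2) : Matrix (Fin 2) (Fin 2) ℝ) =
    !![1 + √2, -√2; 2 + 2 * √2, -1 - √2] := by
  have hs : √2 * √2 = 2 := Real.mul_self_sqrt zero_le_two
  rw [pow_two, coe_mul, coe_RgenR, mul_fin_two]
  congrm !![?_, ?_; ?_, ?_] <;> linarith

lemma coe_RgenR_pow_three : ((RgenR ^ 3 : SL2) : Matrix (Fin 2) (Fin 2) ℝ) =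
    !![1, -1; 2 + √2, -1 - √2] := by
  have hs : √2 * √2 = 2 := Real.mul_self_sqrt zero_le_two
  rw [pow_succ, coe_mul, coe_RgenR_sq, coe_RgenR, mul_fin_two]
  congrm !![?_, ?_; ?_, ?_] <;> linarith

lemma RgenR_pow_four : RgenR ^ 4 = -1 := by
  have hs : √2 * √2 = 2 := Real.mul_self_sqrt zero_le_two
  refine Subtype.ext ?_
  rw [pow_succ, coe_mul, coe_RgenR_pow_three, coe_neg, coe_one, coe_RgenR, mul_fin_two,
    one_fin_two]
  ext i j; fin_cases i <;> fin_cases j <;> simp <;> linarith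

lemma RgenR_zpow_four_mul (k : ℤ) : RgenR ^ (4 * k) = 1 ∨ RgenR ^ (4 * k) = -1 := by
  rw [_root_.zpow_mul, zpow_ofNat, RgenR_pow_four]
  exact (Int.even_or_odd k).imp Even.neg_one_zpow Odd.neg_one_zpow

/-- `[v 0 : v 1] ∈ ℝP¹` lies in `(n, n + 1]`. Stated without division, so that it fails at
`∞ = [1 : 0]` with no case split. -/
def InIoc (n : ℤ) (v : Fin 2 → ℝ) : Prop :=
  0 < (v 0 - n * v 1) * v 1 ∧ (v 0 - (n + 1) * v 1) * v 1 ≤ 0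

namespace InIoc

variable {n : ℤ} {v : Fin 2 → ℝ}

lemma apply_one_ne_zero (h : InIoc n v) : v 1 ≠ 0 := by
  intro h1
  simpa [h1] using h.1

lemma neg (h : InIoc n v) : InIoc n (-v) := by
  obtain ⟨h1, h2⟩ := h
  simp only [InIoc, Pi.neg_apply]
  constructor <;> linarith

lemma not_inIoc_zero (h : InIoc n v) (hn : n ≠ 0) : ¬ InIoc 0 v := by
  rintro ⟨h1, h2⟩
  obtain ⟨h3, h4⟩ := h
  simp only [Int.cast_zero, zero_mul, sub_zero, zero_add, one_mul] at h1 h2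
  rcases (by omega : 1 ≤ n ∨ n ≤ -1) with hn | hn
  · have : (1 : ℝ) ≤ n := by exact_mod_cast hn
    nlinarith [sq_nonneg (v 1)]
  · have : (n : ℝ) ≤ -1 := by exact_mod_cast hn
    nlinarith [sq_nonneg (v 1)]

end InIoc

lemma inIoc_zpow_SgenR_smul (n : ℤ) {v : Fin 2 → ℝ} (h : InIoc 0 v) :
    InIoc n (SgenR ^ n • v) := by
  obtain ⟨h1, h2⟩ := h
  simp only [InIoc, Int.cast_zero, fin_two_smul, coe_SgenR_zpow, of_apply, cons_val',
    cons_val_zero, cons_val_one, empty_val', cons_val_fin_one] at h1 h2 ⊢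
  constructor <;> linarith

/-- `R`, `R²`, `R³` map the complement of `(0, 1]` onto `(2 - √2, 1]`, `(√2 - 1, 2 - √2]` and
`(0, √2 - 1]` respectively. -/
lemma inIoc_zero_RgenR_pow_smul {c : ℕ} (hc1 : 1 ≤ c) (hc3 : c ≤ 3) {v : Fin 2 → ℝ}
    (hv0 : v ≠ 0) (hv : ¬ InIoc 0 v) : InIoc 0 (RgenR ^ c • v) := by
  have hs : √2 * √2 = 2 := Real.mul_self_sqrt zero_le_two
  have hs1 := Real.one_lt_sqrt_two
  have hpq : v 0 ≠ 0 ∨ v 1 ≠ 0 := by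
    by_contra! h
    exact hv0 (funext fun i => by fin_cases i <;> simp [h])
  simp only [InIoc, Int.cast_zero, zero_mul, sub_zero, zero_add, one_mul, not_and_or, not_lt,
    not_le, fin_two_smul] at hv ⊢
  generalize v 0 = p, v 1 = q at *
  obtain rfl | rfl | rfl : c = 1 ∨ c = 2 ∨ c = 3 := by omega
  all_goals
    simp only [pow_one, coe_RgenR, coe_RgenR_sq, coe_RgenR_pow_three, of_apply, cons_val',
      cons_val_zero, cons_val_one, empty_val', cons_val_fin_one]
    rcases hv with hv | hv <;> rcases hpq with h | h <;> constructor <;>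
      nlinarith [mul_self_pos.2 h, sq_nonneg p, sq_nonneg q, sq_nonneg (p - q)]

lemma inIoc_zero_RgenR_zpow_smul {b : ℤ} (hb : ¬ 4 ∣ b) {v : Fin 2 → ℝ} (hv0 : v ≠ 0)
    (hv : ¬ InIoc 0 v) : InIoc 0 (RgenR ^ b • v) := by
  obtain ⟨c, hc1, hc3, k, rfl⟩ : ∃ c : ℕ, 1 ≤ c ∧ c ≤ 3 ∧ ∃ k, b = 4 * k + c :=
    ⟨(b % 4).toNat, by omega, by omega, b / 4, by omega⟩
  have hc := inIoc_zero_RgenR_pow_smul hc1 hc3 hv0 hv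
  rw [_root_.zpow_add, zpow_natCast, mul_smul]
  rcases RgenR_zpow_four_mul k with h | h <;> rw [h]
  · rwa [one_smul]
  · rw [Matrix.SpecialLinearGroup.neg_smul, one_smul]
    exact hc.neg

lemma inIoc_zpow_SgenR_mul_zpow_RgenR_mul_smul (n : ℤ) {b : ℤ} (hb : ¬ 4 ∣ b) {g : SL2}
    (hg : ¬ InIoc 0 (g • ![1, 0])) : InIoc n ((SgenR ^ n * RgenR ^ b * g) • ![1, 0]) := by
  rw [mul_smul, mul_smul]
  exact inIoc_zpow_SgenR_smul n
    (inIoc_zero_RgenR_zpow_smul hb ((smul_ne_zero_iff_ne g).2 (by simp)) hg)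

inductive HasNormalForm : SL2 → Prop
  | zpow (m : ℤ) : HasNormalForm (SgenR ^ m)
  | neg_zpow (m : ℤ) : HasNormalForm (-SgenR ^ m)
  | cons {g : SL2} (n b : ℤ) (hb : ¬ 4 ∣ b) (hg : HasNormalForm g)
      (hg_infty : ¬ InIoc 0 (g • ![1, 0])) : HasNormalForm (SgenR ^ n * RgenR ^ b * g)

namespace HasNormalForm

variable {g : SL2}

lemma eq_zpow_or_inIoc (h : HasNormalForm g) :
    (∃ m : ℤ, g = SgenR ^ m ∨ g = -SgenR ^ m) ∨ ∃ n : ℤ, InIoc n (g • ![1, 0]) := by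
  cases h with
  | zpow m => exact .inl ⟨m, .inl rfl⟩
  | neg_zpow m => exact .inl ⟨m, .inr rfl⟩
  | cons n b hb hg hg_infty =>
    exact .inr ⟨n, inIoc_zpow_SgenR_mul_zpow_RgenR_mul_smul n hb hg_infty⟩

lemma neg (h : HasNormalForm g) : HasNormalForm (-g) := by
  cases h with
  | zpow m => exact neg_zpow m
  | neg_zpow m => simpa using zpow m
  | @cons g n b hb hg hg_infty =>
    have : -(SgenR ^ n * RgenR ^ b * g) = SgenR ^ n * RgenR ^ (b + 4) * g := by
      rw [_root_.zpow_add, zpow_ofNat, RgenR_pow_four, mul_neg_one, mul_neg, neg_mul]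
    rw [this]
    exact cons n (b + 4) (by omega) hg hg_infty

lemma zpow_SgenR_mul (k : ℤ) (h : HasNormalForm g) : HasNormalForm (SgenR ^ k * g) := by
  cases h with
  | zpow m => simpa [← _root_.zpow_add] using zpow (k + m)
  | neg_zpow m => simpa [← _root_.zpow_add] using neg_zpow (k + m)
  | cons n b hb hg hg_infty =>
    simpa [← mul_assoc, ← _root_.zpow_add] using cons (k + n) b hb hg hg_infty

lemma zpow_RgenR_mul {e : ℤ} (he : ¬ 4 ∣ e) (h : HasNormalForm g) :
    HasNormalForm (RgenR ^ e * g) := by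
  have prepend : ∀ {g : SL2}, HasNormalForm g → ¬ InIoc 0 (g • ![1, 0]) →
      HasNormalForm (RgenR ^ e * g) := fun hg hg_infty => by
    simpa using cons 0 e he hg hg_infty
  cases h with
  | zpow m =>
    refine prepend (zpow m) (mt InIoc.apply_one_ne_zero ?_)
    simp [fin_two_smul, coe_SgenR_zpow]
  | neg_zpow m =>
    refine prepend (neg_zpow m) (mt InIoc.apply_one_ne_zero ?_)
    simp [Matrix.SpecialLinearGroup.neg_smul, fin_two_smul, coe_SgenR_zpow]
  | cons n b hb hg hg_infty =>
    by_cases hn : n = 0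
    · subst hn
      rw [zpow_zero, one_mul, ← mul_assoc, ← _root_.zpow_add]
      by_cases h4 : 4 ∣ e + b
      · obtain ⟨k, hk⟩ := h4
        rcases RgenR_zpow_four_mul k with h1 | h1 <;> rw [hk, h1]
        · simpa using hg
        · simpa using hg.neg
      · simpa using cons 0 (e + b) h4 hg hg_infty
    · exact prepend (cons n b hb hg hg_infty)
        ((inIoc_zpow_SgenR_mul_zpow_RgenR_mul_smul n hb hg_infty).not_inIoc_zero hn)

lemma of_mem_ΓR (hg : g ∈ ΓR) : HasNormalForm g := by
  induction hg using Subgroup.closure_induction_left with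
  | one => simpa using zpow 0
  | mul_left x hx y _ ih =>
    rcases hx with rfl | rfl
    · simpa using ih.zpow_RgenR_mul (e := 1) (by norm_num)
    · simpa using ih.zpow_SgenR_mul 1
  | inv_mul_cancel x hx y _ ih =>
    rcases hx with rfl | rfl
    · simpa using ih.zpow_RgenR_mul (e := -1) (by norm_num)
    · simpa using ih.zpow_SgenR_mul (-1)

end HasNormalForm

theorem eq_zpow_SgenR_of_mem_ΓR {g : SL2} (hg : g ∈ ΓR)
    (hg10 : (g : Matrix (Fin 2) (Fin 2) ℝ) 1 0 = 0) : ∃ m : ℤ, g = SgenR ^ m ∨ g = -SgenR ^ m := by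
  refine (HasNormalForm.of_mem_ΓR hg).eq_zpow_or_inIoc.resolve_right fun ⟨n, hn⟩ => ?_
  exact hn.apply_one_ne_zero (by simp [fin_two_smul, hg10])

lemma coe_Mab_mul_inv {a b c d : ℝ} (ha : a ≠ 0) (hc : c ≠ 0) :
    ((Mab a b ha * (Mab c d hc)⁻¹ : SL2) : Matrix (Fin 2) (Fin 2) ℝ) =
      !![a / c, b * c - a * d; 0, c / a] := by
  rw [coe_mul, coe_inv, Mab, Mab, adjugate_fin_two_of, mul_fin_two]
  congrm !![?_, ?_; ?_, ?_] <;> field_simp <;> ring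

lemma eq_and_mul_sub_eq_of_Mab_mul_inv_eq {a b c d : ℝ} (ha : a ≠ 0) (hc : c ≠ 0) {m : ℤ}
    (h : Mab a b ha * (Mab c d hc)⁻¹ = SgenR ^ m) : a = c ∧ a * (b - d) = m := by
  have hentries : !![a / c, b * c - a * d; 0, c / a] = !![1, (m : ℝ); 0, 1] := by
    rw [← coe_Mab_mul_inv ha hc, h, coe_SgenR_zpow]
  have h00 : a / c = 1 := by simpa using congr_fun (congr_fun hentries 0) 0
  have h01 : b * c - a * d = m := by simpa using congr_fun (congr_fun hentries 0) 1
  obtain rfl : a = c := (div_eq_one_iff_eq hc).1 h00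
  exact ⟨rfl, by linear_combination h01⟩

lemma Mab_mul_inv_ne_neg_zpow {a b c d : ℝ} (ha : 0 < a) (hc : 0 < c) (m : ℤ) :
    Mab a b ha.ne' * (Mab c d hc.ne')⁻¹ ≠ -SgenR ^ m := by
  intro h
  have hentries : !![a / c, b * c - a * d; 0, c / a] = -!![1, (m : ℝ); 0, 1] := by
    rw [← coe_Mab_mul_inv ha.ne' hc.ne', h, coe_neg, coe_SgenR_zpow]
  have h00 : a / c = -1 := by simpa using congr_fun (congr_fun hentries 0) 0
  linarith [div_pos ha hc]

lemma eq_of_mul_sub_eq_intCast {a b d : ℝ} (hab : (a, b) ∈ Ω₂) (had : (a, d) ∈ Ω₂) {m : ℤ}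
    (h : a * (b - d) = m) : b = d := by
  obtain ⟨ha0, ha1, hb, hb1⟩ := hab
  obtain ⟨-, -, hd, hd1⟩ := had
  dsimp only at *
  have hm0 : m = 0 := by
    rw [← Int.abs_lt_one_iff, ← Int.cast_lt (R := ℝ), Int.cast_abs, ← h, abs_lt, Int.cast_one]
    constructor <;> nlinarith
  rw [hm0, Int.cast_zero, mul_eq_zero, sub_eq_zero] at h
  exact h.resolve_left ha0.ne'

/-- The map (a,b) ↦ M_{a,b}·Γ_R from Ω₂ to SL(2,ℝ)/Γ_R is injective. -/
theorem Omega2_injective (a b c d : ℝ) (hab : (a, b) ∈ Ω₂) (hcd : (c, d) ∈ Ω₂)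
    (h : Mab a b (ne_of_gt hab.1) * (Mab c d (ne_of_gt hcd.1))⁻¹ ∈ ΓR) :
    (a, b) = (c, d) := by
  obtain ⟨m, hm | hm⟩ := eq_zpow_SgenR_of_mem_ΓR h (by rw [coe_Mab_mul_inv]; rfl)
  · obtain ⟨rfl, hmul⟩ := eq_and_mul_sub_eq_of_Mab_mul_inv_eq _ _ hm
    rw [eq_of_mul_sub_eq_intCast hab hcd hmul]
  · exact absurd hm (Mab_mul_inv_ne_neg_zpow hab.1 hcd.1 m)
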